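/- arXiv:1504.00626 — 4 statements merged into one kernel-verified Lean document; each statement's English description precedes it below -/
import Mathlib

section
/- In ℝ² with the maximum norm, for K = {(0,0)} and L = {(t,1) : t ∈ [−1,1]}, the Chebyshev centers are C(K) = {(0,0)} and C(L) = {(0,t) : t ∈ [0,2]}, and D(C(K), C(L)) = 2 = 2 D(K,L), showing the estimate D(C(K),C(L)) ≤ 2D(K,L) is sharp. -/
/-! The farthest point of the segment `L` from `y` is one of its endpoints, so in the sup norm
`y` has eccentricity `max (|y 0| + 1) |y 1 - 1|`. This is minimal, equal to `1`, exactly on the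
vertical segment from `(0,0)` to `(0,2)`, whose far end is at distance `2` from the center
`(0,0)` of `K`, while every point of `L` is within `1` of `(0,0)`. -/

open Metric Set

section Chebyshev

variable {α : Type*} [PseudoMetricSpace α]

noncomputable def chebyshevRadius (A : Set α) : ℝ := ⨅ y : α, ⨆ x : A, dist y (x : α)

def chebyshevCenters (A : Set α) : Set α :=
  {y | (⨆ x : A, dist y (x : α)) = chebyshevRadius A}

theorem chebyshevRadius_eq_of_forall_le {A : Set α} {r : ℝ}
    (hr : ∀ y, r ≤ ⨆ x : A, dist y (x : α)) {y₀ : α}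
    (h₀ : (⨆ x : A, dist y₀ (x : α)) = r) :
    chebyshevRadius A = r :=
  have : Nonempty α := ⟨y₀⟩
  le_antisymm (h₀ ▸ ciInf_le ⟨r, forall_mem_range.2 hr⟩ y₀) (le_ciInf hr)

theorem iSup_dist_singleton (y a : α) : (⨆ x : ({a} : Set α), dist y (x : α)) = dist y a :=
  ciSup_unique

theorem chebyshevRadius_singleton (a : α) : chebyshevRadius {a} = 0 :=
  chebyshevRadius_eq_of_forall_le (fun y => (iSup_dist_singleton y a).symm ▸ dist_nonneg)
    (y₀ := a) (by rw [iSup_dist_singleton, dist_self])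

theorem chebyshevCenters_singleton {β : Type*} [MetricSpace β] (a : β) :
    chebyshevCenters {a} = {a} := by
  ext y
  show _ = _ ↔ _
  rw [iSup_dist_singleton, chebyshevRadius_singleton, dist_eq_zero, mem_singleton_iff]

end Chebyshev

theorem Metric.hausdorffDist_singleton_eq_of_isGreatest {α : Type*} [PseudoMetricSpace α]
    {a : α} {s : Set α} {r : ℝ} (h : IsGreatest (dist a '' s) r) :
    hausdorffDist {a} s = r := by
  obtain ⟨⟨b, hb, rfl⟩, hmax⟩ := h
  have hle : ∀ x ∈ s, dist a x ≤ dist a b := fun x hx => hmax (mem_image_of_mem _ hx)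
  have hfin : hausdorffEDist s {a} ≠ ⊤ :=
    hausdorffEDist_ne_top_of_nonempty_of_bounded ⟨b, hb⟩ (singleton_nonempty a)
      (isBounded_closedBall.subset fun x hx => mem_closedBall'.2 (hle x hx))
      Bornology.isBounded_singleton
  apply le_antisymm
  · refine hausdorffDist_le_of_mem_dist dist_nonneg ?_ fun x hx => ?_
    · rintro x rfl
      exact ⟨b, hb, le_rfl⟩
    · exact ⟨a, rfl, dist_comm x a ▸ hle x hx⟩
  · calc dist a b = infDist b {a} := by rw [infDist_singleton, dist_comm]
      _ ≤ hausdorffDist s {a} := infDist_le_hausdorffDist_of_mem hb hfin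
      _ = hausdorffDist {a} s := hausdorffDist_comm

theorem dist_fin_two (y x : Fin 2 → ℝ) : dist y x = max |y 0 - x 0| |y 1 - x 1| := by
  refine le_antisymm (dist_pi_le_iff'.2 (Fin.forall_fin_two.2 ⟨?_, ?_⟩)) (max_le ?_ ?_)
  · exact (Real.dist_eq _ _).trans_le (le_max_left _ _)
  · exact (Real.dist_eq _ _).trans_le (le_max_right _ _)
  · exact (Real.dist_eq _ _).symm.trans_le (dist_le_pi_dist y x 0)
  · exact (Real.dist_eq _ _).symm.trans_le (dist_le_pi_dist y x 1)

def topEdge : Set (Fin 2 → ℝ) := {p | p 1 = 1 ∧ p 0 ∈ Icc (-1 : ℝ) 1}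

theorem mem_topEdge_of_mem_Icc {t : ℝ} (ht : t ∈ Icc (-1 : ℝ) 1) : ![t, 1] ∈ topEdge :=
  ⟨rfl, ht⟩

theorem dist_le_of_mem_topEdge (y : Fin 2 → ℝ) {x : Fin 2 → ℝ} (hx : x ∈ topEdge) :
    dist y x ≤ max (|y 0| + 1) |y 1 - 1| := by
  rw [dist_fin_two, hx.1]
  refine max_le_max_right _ ((abs_sub _ _).trans ?_)
  linarith [abs_le.2 hx.2]

theorem iSup_dist_topEdge (y : Fin 2 → ℝ) :
    (⨆ x : topEdge, dist y (x : Fin 2 → ℝ)) = max (|y 0| + 1) |y 1 - 1| := by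
  have : Nonempty topEdge := ⟨⟨_, mem_topEdge_of_mem_Icc (t := 0) (by norm_num)⟩⟩
  have hbdd : BddAbove (range fun x : topEdge => dist y x) :=
    ⟨_, forall_mem_range.2 fun x => dist_le_of_mem_topEdge y x.2⟩
  have hend : ∀ t ∈ Icc (-1 : ℝ) 1, max |y 0 - t| |y 1 - 1| ≤ ⨆ x : topEdge, dist y x :=
    fun t ht => le_ciSup_of_le hbdd ⟨_, mem_topEdge_of_mem_Icc ht⟩ (by simp [dist_fin_two])
  refine le_antisymm (ciSup_le fun x => dist_le_of_mem_topEdge y x.2) ?_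
  rcases le_total 0 (y 0) with h | h
  · refine le_trans (le_of_eq ?_) (hend (-1) (by norm_num))
    congr 1
    rw [sub_neg_eq_add, abs_of_nonneg h, abs_of_nonneg (by linarith)]
  · refine le_trans (le_of_eq ?_) (hend 1 (by norm_num))
    congr 1
    rw [abs_of_nonpos h, abs_of_nonpos (by linarith)]
    ring

theorem chebyshevRadius_topEdge : chebyshevRadius topEdge = 1 :=
  chebyshevRadius_eq_of_forall_le
    (fun y => (iSup_dist_topEdge y).symm ▸ le_max_of_le_left (by linarith [abs_nonneg (y 0)]))
    (y₀ := ![0, 1]) (by simp [iSup_dist_topEdge])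

theorem chebyshevCenters_topEdge :
    chebyshevCenters topEdge = {p : Fin 2 → ℝ | p 0 = 0 ∧ p 1 ∈ Icc (0 : ℝ) 2} := by
  ext p
  show _ = _ ↔ _
  rw [iSup_dist_topEdge, chebyshevRadius_topEdge]
  constructor
  · intro h
    have h0 : |p 0| = 0 := by linarith [le_max_left (|p 0| + 1) |p 1 - 1|, abs_nonneg (p 0)]
    have h1 := abs_le.1 ((le_max_right _ _).trans h.le)
    exact ⟨abs_eq_zero.1 h0, by linarith, by linarith⟩
  · rintro ⟨h0, h1⟩
    rw [h0, abs_zero, zero_add]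
    exact max_eq_left (abs_le.2 ⟨by linarith [h1.1], by linarith [h1.2]⟩)

theorem hausdorffDist_origin_chebyshevCenters_topEdge :
    hausdorffDist {![0, 0]} (chebyshevCenters topEdge) = 2 := by
  rw [chebyshevCenters_topEdge]
  refine hausdorffDist_singleton_eq_of_isGreatest
    ⟨⟨![0, 2], ⟨rfl, by norm_num⟩, by simp [dist_fin_two]⟩, forall_mem_image.2 ?_⟩
  rintro p ⟨h0, h1⟩
  simp [dist_fin_two, h0, abs_of_nonneg h1.1, h1.2]

theorem hausdorffDist_origin_topEdge : hausdorffDist {![0, 0]} topEdge = 1 := by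
  refine hausdorffDist_singleton_eq_of_isGreatest
    ⟨⟨![0, 1], mem_topEdge_of_mem_Icc (by norm_num), by simp [dist_fin_two]⟩,
      forall_mem_image.2 ?_⟩
  rintro p ⟨h1, h0⟩
  simp [dist_fin_two, h1, abs_le.2 h0]

/-- In `ℝ²` with the maximum norm, for `K = {(0,0)}` and `L = {(t,1) : t ∈ [-1,1]}`,
`C(K) = {(0,0)}`, `C(L) = {(0,t) : t ∈ [0,2]}`, and
`D(C(K),C(L)) = 2 = 2·D(K,L)`, so the estimate `D(C(K),C(L)) ≤ 2D(K,L)` is sharp. -/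
theorem stmt_8 :
    let M := Fin 2 → ℝ
    let rad : Set M → ℝ := fun A => ⨅ y : M, ⨆ x : A, dist y (x : M)
    let C : Set M → Set M := fun A => {y : M | (⨆ x : A, dist y (x : M)) = rad A}
    let K : Set M := {![0, 0]}
    let L : Set M := {p : M | p 1 = 1 ∧ p 0 ∈ Set.Icc (-1 : ℝ) 1}
    C K = {![0, 0]} ∧
    C L = {p : M | p 0 = 0 ∧ p 1 ∈ Set.Icc (0 : ℝ) 2} ∧
    Metric.hausdorffDist (C K) (C L) = 2 ∧
    Metric.hausdorffDist K L = 1 ∧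
    Metric.hausdorffDist (C K) (C L) = 2 * Metric.hausdorffDist K L := by
  intro M rad C K L
  have hCK : C K = {![0, 0]} := chebyshevCenters_singleton _
  have hCKL : hausdorffDist (C K) (C L) = 2 := by
    rw [hCK]; exact hausdorffDist_origin_chebyshevCenters_topEdge
  have hKL : hausdorffDist K L = 1 := hausdorffDist_origin_topEdge
  exact ⟨hCK, chebyshevCenters_topEdge, hCKL, hKL, by rw [hCKL, hKL]; norm_num⟩
end

section
/- The mapping T : ℓ∞ → ℓ∞ defined by T(x₁,x₂,…) = (1 + LIM xₙ, x₁, x₂, …), where LIM is a Banach limit, satisfies ‖Tⁿx − Tⁿy‖ = ‖x − y‖ and ‖Tⁿx‖ ≤ 1 + ‖x‖ for all x,y ∈ ℓ∞ and n ∈ ℕ, yet T has no fixed point. -/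
set_option maxHeartbeats 1000000


/-- Prus's example: the map `T(x₁,x₂,…) = (1 + LIM xₙ, x₁, x₂, …)` on `ℓ∞` (where
`LIM` is a Banach limit) satisfies `‖Tⁿx - Tⁿy‖ = ‖x - y‖` and `‖Tⁿx‖ ≤ 1 + ‖x‖`,
yet has no fixed point. -/
theorem stmt_11
    (LIM : lp (fun _ : ℕ => ℝ) ⊤ →ₗ[ℝ] ℝ)
    (hpos : ∀ x : lp (fun _ : ℕ => ℝ) ⊤, (∀ n, 0 ≤ x n) → 0 ≤ LIM x)
    (hone : ∀ x : lp (fun _ : ℕ => ℝ) ⊤, (∀ n, x n = 1) → LIM x = 1)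
    (hshift : ∀ x y : lp (fun _ : ℕ => ℝ) ⊤, (∀ n, y n = x (n + 1)) → LIM y = LIM x)
    (T : lp (fun _ : ℕ => ℝ) ⊤ → lp (fun _ : ℕ => ℝ) ⊤)
    (hT : ∀ x, (T x) 0 = 1 + LIM x ∧ ∀ n, (T x) (n + 1) = x n) :
    (∀ (n : ℕ) (x y : lp (fun _ : ℕ => ℝ) ⊤), ‖T^[n] x - T^[n] y‖ = ‖x - y‖) ∧
    (∀ (n : ℕ) (x : lp (fun _ : ℕ => ℝ) ⊤), ‖T^[n] x‖ ≤ 1 + ‖x‖) ∧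
    ¬∃ x : lp (fun _ : ℕ => ℝ) ⊤, T x = x := by
  -- `LIM` is bounded: `|LIM x| ≤ ‖x‖`
  have hLIMone : LIM 1 = 1 := hone 1 (fun n => by
    rw [lp.infty_coeFn_one]; rfl)
  have habs : ∀ x : lp (fun _ : ℕ => ℝ) ⊤, |LIM x| ≤ ‖x‖ := by
    intro x
    rw [abs_le]
    constructor
    · have h := hpos (x + ‖x‖ • 1) (fun n => by
        have h1 : ‖x n‖ ≤ ‖x‖ := lp.norm_apply_le_norm ENNReal.top_ne_zero x n
        have : (x + ‖x‖ • 1) n = x n + ‖x‖ := by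
          simp only [lp.coeFn_add, lp.coeFn_sub, lp.coeFn_smul, lp.coeFn_zero, lp.infty_coeFn_one, Pi.add_apply, Pi.sub_apply, Pi.smul_apply, Pi.zero_apply, Pi.one_apply, smul_eq_mul, mul_one]
        rw [this]
        rw [Real.norm_eq_abs] at h1
        have hb := abs_le.mp h1
        linarith [hb.1])
      rw [map_add, map_smul, hLIMone, smul_eq_mul, mul_one] at h
      linarith
    · have h := hpos (‖x‖ • 1 - x) (fun n => by
        have h1 : ‖x n‖ ≤ ‖x‖ := lp.norm_apply_le_norm ENNReal.top_ne_zero x n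
        have : (‖x‖ • 1 - x) n = ‖x‖ - x n := by
          simp only [lp.coeFn_add, lp.coeFn_sub, lp.coeFn_smul, lp.coeFn_zero, lp.infty_coeFn_one, Pi.add_apply, Pi.sub_apply, Pi.smul_apply, Pi.zero_apply, Pi.one_apply, smul_eq_mul, mul_one]
        rw [this]
        rw [Real.norm_eq_abs] at h1
        have hb := abs_le.mp h1
        linarith [hb.2])
      rw [map_sub, map_smul, hLIMone, smul_eq_mul, mul_one] at h
      linarith
  -- T is an isometry on differences
  have hiso : ∀ x y : lp (fun _ : ℕ => ℝ) ⊤, ‖T x - T y‖ = ‖x - y‖ := by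
    intro x y
    apply le_antisymm
    · apply lp.norm_le_of_forall_le (norm_nonneg _)
      intro i
      cases i with
      | zero =>
        have : (T x - T y) 0 = LIM (x - y) := by
          simp only [lp.coeFn_add, lp.coeFn_sub, lp.coeFn_smul, lp.coeFn_zero, lp.infty_coeFn_one, Pi.add_apply, Pi.sub_apply, Pi.smul_apply, Pi.zero_apply, Pi.one_apply, smul_eq_mul, mul_one]
          rw [(hT x).1, (hT y).1, map_sub]
          ring
        rw [this]
        rw [Real.norm_eq_abs]
        exact habs (x - y)
      | succ n =>
        have : (T x - T y) (n + 1) = (x - y) n := by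
          simp only [lp.coeFn_add, lp.coeFn_sub, lp.coeFn_smul, lp.coeFn_zero, lp.infty_coeFn_one, Pi.add_apply, Pi.sub_apply, Pi.smul_apply, Pi.zero_apply, Pi.one_apply, smul_eq_mul, mul_one]
          rw [(hT x).2 n, (hT y).2 n]
        rw [this]
        exact lp.norm_apply_le_norm ENNReal.top_ne_zero (x - y) n
    · apply lp.norm_le_of_forall_le (norm_nonneg _)
      intro n
      have : (x - y) n = (T x - T y) (n + 1) := by
        simp only [lp.coeFn_add, lp.coeFn_sub, lp.coeFn_smul, lp.coeFn_zero, lp.infty_coeFn_one, Pi.add_apply, Pi.sub_apply, Pi.smul_apply, Pi.zero_apply, Pi.one_apply, smul_eq_mul, mul_one]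
        rw [(hT x).2 n, (hT y).2 n]
      rw [show ‖(x - y) n‖ = ‖(T x - T y) (n + 1)‖ by rw [this]]
      exact lp.norm_apply_le_norm ENNReal.top_ne_zero (T x - T y) (n + 1)
  have hiso_iter : ∀ (n : ℕ) (x y : lp (fun _ : ℕ => ℝ) ⊤),
      ‖T^[n] x - T^[n] y‖ = ‖x - y‖ := by
    intro n
    induction n with
    | zero =>
      intro x y
      rw [Function.iterate_zero_apply, Function.iterate_zero_apply]
    | succ n ih =>
      intro x y
      rw [Function.iterate_succ_apply', Function.iterate_succ_apply', hiso, ih]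
  -- orbit of 0 stays in [0,1]^ℕ with LIM = 0
  have horbit : ∀ n : ℕ, (∀ k, 0 ≤ (T^[n] 0) k ∧ (T^[n] 0) k ≤ 1) ∧
      LIM (T^[n] 0) = 0 := by
    intro n
    induction n with
    | zero =>
      refine ⟨fun k => ?_, by rw [Function.iterate_zero_apply, map_zero]⟩
      rw [Function.iterate_zero_apply]
      simp only [lp.coeFn_add, lp.coeFn_sub, lp.coeFn_smul, lp.coeFn_zero, lp.infty_coeFn_one, Pi.add_apply, Pi.sub_apply, Pi.smul_apply, Pi.zero_apply, Pi.one_apply, smul_eq_mul, mul_one]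
      norm_num
    | succ n ih =>
      rw [Function.iterate_succ_apply']
      constructor
      · intro k
        cases k with
        | zero =>
          rw [(hT (T^[n] 0)).1, ih.2]
          norm_num
        | succ m =>
          rw [(hT (T^[n] 0)).2 m]
          exact ih.1 m
      · rw [← hshift (T (T^[n] 0)) (T^[n] 0) (fun m => ((hT (T^[n] 0)).2 m).symm)]
        exact ih.2
  have hnorm0 : ∀ n : ℕ, ‖T^[n] (0 : lp (fun _ : ℕ => ℝ) ⊤)‖ ≤ 1 := by
    intro n
    apply lp.norm_le_of_forall_le zero_le_one
    intro k
    have := (horbit n).1 k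
    rw [Real.norm_eq_abs, abs_le]
    constructor <;> linarith [this.1, this.2]
  refine ⟨hiso_iter, ?_, ?_⟩
  · intro n x
    calc ‖T^[n] x‖ = ‖(T^[n] x - T^[n] 0) + T^[n] 0‖ := by ring_nf
      _ ≤ ‖T^[n] x - T^[n] 0‖ + ‖T^[n] 0‖ := norm_add_le _ _
      _ = ‖x - 0‖ + ‖T^[n] 0‖ := by rw [hiso_iter]
      _ ≤ ‖x‖ + 1 := by rw [sub_zero]; linarith [hnorm0 n]
      _ = 1 + ‖x‖ := by ring
  · rintro ⟨x, hx⟩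
    have hconst : ∀ n, x n = x 0 := by
      intro n
      induction n with
      | zero => rfl
      | succ m ih =>
        have h2 := (hT x).2 m
        rw [hx] at h2
        exact h2.trans ih
    have hxeq : x = x 0 • (1 : lp (fun _ : ℕ => ℝ) ⊤) := by
      ext n
      simp only [lp.coeFn_add, lp.coeFn_sub, lp.coeFn_smul, lp.coeFn_zero, lp.infty_coeFn_one, Pi.add_apply, Pi.sub_apply, Pi.smul_apply, Pi.zero_apply, Pi.one_apply, smul_eq_mul, mul_one]
      exact hconst n
    have hLIMx : LIM x = x 0 := by
      have h3 := congrArg LIM hxeq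
      rw [map_smul, hLIMone, smul_eq_mul, mul_one] at h3
      exact h3
    have h0 := (hT x).1
    rw [hx, hLIMx] at h0
    linarith
end

section
/- Every λ-hyperconvex metric space is complete. -/
/-!
A Cauchy sequence `x` comes with radii `r n → 0` such that the closed balls `B(x n, r n)` satisfy
`d(x n, x m) ≤ r n + r m`. Applying `λ`-hyperconvexity with `D = M` (the empty intersection of
balls) yields a point `y` with `d(x n, y) ≤ λ r n` for all `n`, so `x n → y`.
-/

open Filter Topology

theorem CauchySeq.exists_dist_le_add_tendsto_zero {α : Type*} [PseudoMetricSpace α]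
    {x : ℕ → α} (hx : CauchySeq x) :
    ∃ r : ℕ → ℝ, (∀ i j, dist (x i) (x j) ≤ r i + r j) ∧ Tendsto r atTop (𝓝 0) := by
  obtain ⟨b, hb_nonneg, hb_dist, hb_lim⟩ := cauchySeq_iff_le_tendsto_0.1 hx
  refine ⟨b, fun i j => ?_, hb_lim⟩
  rcases le_total i j with hij | hji
  · linarith [hb_dist i j i le_rfl hij, hb_nonneg j]
  · linarith [hb_dist i j j hji le_rfl, hb_nonneg i]

theorem stmt_13_general {M : Type*} [MetricSpace M] (lam : ℝ)
    (hconv : ∀ (J ι : Type) (c : J → M) (ρ : J → ℝ) (x : ι → M) (r : ι → ℝ),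
      (⋂ j, Metric.closedBall (c j) (ρ j)).Nonempty →
      (∀ i, x i ∈ ⋂ j, Metric.closedBall (c j) (ρ j)) →
      (∀ i i', dist (x i) (x i') ≤ r i + r i') →
      ((⋂ j, Metric.closedBall (c j) (ρ j)) ∩
        ⋂ i, Metric.closedBall (x i) (lam * r i)).Nonempty) :
    CompleteSpace M := by
  refine Metric.complete_of_cauchySeq_tendsto fun x hx => ?_
  obtain ⟨r, hr_dist, hr_lim⟩ := hx.exists_dist_le_add_tendsto_zero
  obtain ⟨y, -, hy⟩ := hconv Empty ℕ Empty.elim Empty.elim x r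
    ⟨x 0, by simp⟩ (by simp) hr_dist
  have hdist : ∀ n, dist (x n) y ≤ lam * r n := fun n =>
    dist_comm y (x n) ▸ Set.mem_iInter.1 hy n
  refine ⟨y, tendsto_iff_dist_tendsto_zero.2 ?_⟩
  exact squeeze_zero (fun n => dist_nonneg) hdist (by simpa using hr_lim.const_mul lam)

/-- Every `λ`-hyperconvex metric space is complete. -/
theorem stmt_13 {M : Type*} [MetricSpace M] (lam : ℝ) (hlam : 1 ≤ lam)
    (hconv : ∀ (J ι : Type) (c : J → M) (ρ : J → ℝ) (x : ι → M) (r : ι → ℝ),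
      (⋂ j, Metric.closedBall (c j) (ρ j)).Nonempty →
      (∀ i, x i ∈ ⋂ j, Metric.closedBall (c j) (ρ j)) →
      (∀ i i', dist (x i) (x i') ≤ r i + r i') →
      ((⋂ j, Metric.closedBall (c j) (ρ j)) ∩
        ⋂ i, Metric.closedBall (x i) (lam * r i)).Nonempty) :
    CompleteSpace M :=
  stmt_13_general lam hconv
end

section
/- Let X be a complete bounded metric space and f : X → X a k-Lipschitzian mapping such that there exist 0 < γ < 1 and c > 0 with d(f^{n+1}(x), f^n(x)) ≤ c γⁿ for every x ∈ X and n ∈ ℕ. Then R x = lim_{n→∞} fⁿ(x) exists for every x and R : X → X is Hölder continuous. -/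
/-!
The orbits are Cauchy with geometric rate, so `R x = lim fⁿ x` exists and
`d(fⁿ x, R x) ≤ c γⁿ / (1 - γ)`. Comparing the two orbits at time `n` gives, with `K = max k 1`,
`d(R x, R y) ≤ A γⁿ + Kⁿ d(x, y)` for every `n`. For `t = d(x, y) < 1` the two terms are balanced
by taking `n ≈ log t / (log γ - log K)`, which makes both of order `t ^ α` with
`α = log γ / (log γ - log K) ∈ (0, 1]`; for `t ≥ 1` the boundedness of `X` suffices.
-/

open Filter Topology Real

theorem le_mul_rpow_of_forall_le_geometric_add_of_lt_one {A K γ t u : ℝ} (hA : 0 ≤ A)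
    (hγ0 : 0 < γ) (hγ1 : γ < 1) (hK : 1 ≤ K) (ht0 : 0 < t) (ht1 : t < 1)
    (h : ∀ n : ℕ, u ≤ A * γ ^ n + K ^ n * t) :
    u ≤ (A + K) * t ^ (log γ / (log γ - log K)) := by
  have hL : log γ - log K < 0 := by linarith [log_neg hγ0 hγ1, log_nonneg hK]
  set α := log γ / (log γ - log K)
  set τ := log t / (log γ - log K)
  have hτ : 0 ≤ τ := div_nonneg_of_nonpos (log_neg ht0 ht1).le hL.le
  have hK0 : 0 < K := by linarith
  have hγτ : γ ^ τ = t ^ α := by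
    rw [rpow_def_of_pos hγ0, rpow_def_of_pos ht0]
    congr 1
    simp only [α, τ]
    ring
  have hKτ : K ^ τ * t = t ^ α := by
    rw [rpow_def_of_pos hK0, rpow_def_of_pos ht0, ← exp_log ht0, ← exp_add, log_exp]
    congr 1
    simp only [α, τ]
    field_simp [hL.ne]
    ring
  set n := ⌈τ⌉₊
  have hγn : γ ^ n ≤ γ ^ τ := by
    rw [← rpow_natCast]
    exact rpow_le_rpow_of_exponent_ge hγ0 hγ1.le (Nat.le_ceil τ)
  have hKn : K ^ n ≤ K ^ τ * K := by
    rw [← rpow_natCast, ← rpow_add_one hK0.ne']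
    exact rpow_le_rpow_of_exponent_le hK (Nat.ceil_lt_add_one hτ).le
  calc u ≤ A * γ ^ n + K ^ n * t := h n
    _ ≤ A * γ ^ τ + K ^ τ * K * t := by gcongr
    _ = (A + K) * t ^ α := by rw [hγτ, mul_right_comm, hKτ]; ring

theorem log_div_log_sub_log_mem_Ioc {γ K : ℝ} (hγ0 : 0 < γ) (hγ1 : γ < 1) (hK : 1 ≤ K) :
    log γ / (log γ - log K) ∈ Set.Ioc 0 1 := by
  have hγ := log_neg hγ0 hγ1
  have hK := log_nonneg hK
  exact ⟨div_pos_of_neg_of_neg hγ (by linarith),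
    (div_le_one_of_neg (by linarith)).mpr (by linarith)⟩

theorem le_mul_rpow_of_forall_le_geometric_add {A K γ D t u : ℝ} (hA : 0 ≤ A)
    (hγ0 : 0 < γ) (hγ1 : γ < 1) (hK : 1 ≤ K) (hD : 0 ≤ D) (huD : u ≤ D) (ht : 0 ≤ t)
    (h : ∀ n : ℕ, u ≤ A * γ ^ n + K ^ n * t) :
    u ≤ (A + K + D) * t ^ (log γ / (log γ - log K)) := by
  have hα := log_div_log_sub_log_mem_Ioc hγ0 hγ1 hK
  set α := log γ / (log γ - log K)
  rcases ht.eq_or_lt with rfl | ht0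
  · have hlim : Tendsto (fun n : ℕ => A * γ ^ n + K ^ n * 0) atTop (𝓝 0) := by
      simpa using (tendsto_pow_atTop_nhds_zero_of_lt_one hγ0.le hγ1).const_mul A
    simpa [zero_rpow hα.1.ne'] using ge_of_tendsto' hlim h
  rcases lt_or_ge t 1 with ht1 | ht1
  · calc u ≤ (A + K) * t ^ α :=
          le_mul_rpow_of_forall_le_geometric_add_of_lt_one hA hγ0 hγ1 hK ht0 ht1 h
      _ ≤ (A + K + D) * t ^ α := by gcongr ?_ * _; linarith
  · calc u ≤ D := huD
      _ ≤ (A + K + D) * t ^ α := by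
        nlinarith [one_le_rpow ht1 hα.1.le]

theorem dist_le_geometric_add_of_tendsto_iterate {X : Type*} [PseudoMetricSpace X] {f : X → X}
    {K : NNReal} (hf : LipschitzWith K f) {c γ : ℝ} (hγ1 : γ < 1)
    (hstep : ∀ x n, dist (f^[n] x) (f^[n + 1] x) ≤ c * γ ^ n) {R : X → X}
    (hR : ∀ x, Tendsto (fun n => f^[n] x) atTop (𝓝 (R x))) (x y : X) (n : ℕ) :
    dist (R x) (R y) ≤ 2 * c / (1 - γ) * γ ^ n + K ^ n * dist x y := by
  have hlim z : dist (f^[n] z) (R z) ≤ c * γ ^ n / (1 - γ) :=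
    dist_le_of_le_geometric_of_tendsto γ c hγ1 (hstep z) (hR z) n
  calc dist (R x) (R y)
      ≤ dist (R x) (f^[n] x) + dist (f^[n] x) (f^[n] y) + dist (f^[n] y) (R y) :=
        dist_triangle4 _ _ _ _
    _ ≤ c * γ ^ n / (1 - γ) + K ^ n * dist x y + c * γ ^ n / (1 - γ) := by
        gcongr
        · exact dist_comm (R x) _ ▸ hlim x
        · simpa using (hf.iterate n).dist_le_mul x y
        · exact hlim y
    _ = 2 * c / (1 - γ) * γ ^ n + K ^ n * dist x y := by ring

/-- If `X` is complete and bounded, `f` is `k`-Lipschitzian and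
`d(f^{n+1}x, f^n x) ≤ c·γⁿ` with `0 < γ < 1`, `c > 0`, then `Rx = lim fⁿx` exists
and `R` is Hölder continuous. -/
theorem stmt_17 {X : Type*} [MetricSpace X] [CompleteSpace X]
    (hbdd : Bornology.IsBounded (Set.univ : Set X))
    (f : X → X) (k : ℝ) (hk : ∀ x y, dist (f x) (f y) ≤ k * dist x y)
    (c γ : ℝ) (hγ0 : 0 < γ) (hγ1 : γ < 1) (hc : 0 < c)
    (hiter : ∀ (x : X) (n : ℕ), dist (f^[n + 1] x) (f^[n] x) ≤ c * γ ^ n) :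
    ∃ R : X → X,
      (∀ x : X, Filter.Tendsto (fun n => f^[n] x) Filter.atTop (nhds (R x))) ∧
      ∃ C > (0 : ℝ), ∃ α ∈ Set.Ioc (0 : ℝ) 1,
        ∀ x y : X, dist (R x) (R y) ≤ C * dist x y ^ α := by
  have hstep x n : dist (f^[n] x) (f^[n + 1] x) ≤ c * γ ^ n := dist_comm (f^[n] x) _ ▸ hiter x n
  choose R hR using fun x =>
    cauchySeq_tendsto_of_complete (cauchySeq_of_le_geometric γ c hγ1 (hstep x))
  -- Enlarging `k` to `K ≥ 1` keeps the Hölder exponent in `(0, 1]`.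
  set K : NNReal := ⟨max k 1, by positivity⟩
  have hK : (1 : ℝ) ≤ K := le_max_right k 1
  have hf : LipschitzWith K f :=
    .of_dist_le_mul fun x y => (hk x y).trans (by gcongr; exact le_max_left k 1)
  set A := 2 * c / (1 - γ)
  have hA : 0 < A := div_pos (by positivity) (by linarith)
  set D := Metric.diam (Set.univ : Set X)
  refine ⟨R, hR, A + K + D, by positivity, _, log_div_log_sub_log_mem_Ioc hγ0 hγ1 hK,
    fun x y => ?_⟩
  exact le_mul_rpow_of_forall_le_geometric_add hA.le hγ0 hγ1 hK Metric.diam_nonneg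
    (Metric.dist_le_diam_of_mem hbdd trivial trivial) dist_nonneg
    (dist_le_geometric_add_of_tendsto_iterate hf hγ1 hstep hR x y)
end
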